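/- arXiv:2308.10793 — 5 statements merged into one kernel-verified Lean document; each statement's English description precedes it below -/
import Mathlib

section
/- Let R = (W, V, h) be a linear reservoir system with ‖W‖ = λ ∈ (0,1), and fix a bound M > 0 on input streams. Then for every ε > 0 there exist an integer n' ≥ n, an n'×n' unitary complex matrix U, an n'×m complex matrix V', and a continuous readout h' : ℂ^{n'} → ℂ^d which is h with linearly transformed domain, such that the linear reservoir system R' = (λU, V', h') is ε-close to R. -/
/-- Operator norm of a complex matrix w.r.t. Euclidean norms. -/
noncomputable def opNorm {ι κ : Type*} [Fintype ι] [Fintype κ] [DecidableEq κ]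
    (A : Matrix ι κ ℂ) : ℝ :=
  ‖LinearMap.toContinuousLinearMap (Matrix.toEuclideanLin A)‖

/-- The state of the linear reservoir system `(W, V, ·)` at time `t` on input stream `c`. -/
noncomputable def resState {ι κ : Type*} [Fintype ι] [DecidableEq ι] [Fintype κ]
    (W : Matrix ι ι ℂ) (V : Matrix ι κ ℂ)
    (c : ℤ → EuclideanSpace ℂ κ) (t : ℤ) : EuclideanSpace ℂ ι :=
  ∑' k : ℕ, WithLp.toLp 2 (Matrix.mulVec (W ^ k * V) (c (t - k)))

/-- The permutation matrix associated to a permutation `σ` (entry `i j` is `1` iff `σ i = j`). -/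
def permMatrix {ι : Type*} [DecidableEq ι] (σ : Equiv.Perm ι) : Matrix ι ι ℂ :=
  Matrix.of fun i j => if σ i = j then 1 else 0

/-- A permutation is a full cycle iff it acts transitively. -/
def IsFullCycle {ι : Type*} (σ : Equiv.Perm ι) : Prop :=
  ∀ i j : ι, ∃ k : ℕ, (σ ^ k) i = j

def IsContractiveFullCycle {ι : Type*} [DecidableEq ι] (W : Matrix ι ι ℂ) : Prop :=
  ∃ (l : ℝ) (σ : Equiv.Perm ι), 0 < l ∧ l < 1 ∧ IsFullCycle σ ∧ W = (l : ℂ) • permMatrix σ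

/-- Two linear reservoir systems are `ε`-close for input streams bounded by `Mb`. -/
def EpsClose {ι₁ ι₂ κ od : Type*} [Fintype ι₁] [DecidableEq ι₁] [Fintype ι₂] [DecidableEq ι₂]
    [Fintype κ] [Fintype od] (Mb ε : ℝ)
    (W₁ : Matrix ι₁ ι₁ ℂ) (V₁ : Matrix ι₁ κ ℂ) (h₁ : EuclideanSpace ℂ ι₁ → EuclideanSpace ℂ od)
    (W₂ : Matrix ι₂ ι₂ ℂ) (V₂ : Matrix ι₂ κ ℂ) (h₂ : EuclideanSpace ℂ ι₂ → EuclideanSpace ℂ od) :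
    Prop :=
  ∀ c : ℤ → EuclideanSpace ℂ κ, (∀ t : ℤ, t ≤ 0 → ‖c t‖ ≤ Mb) →
    ∀ t : ℤ, t ≤ 0 → ‖h₁ (resState W₁ V₁ c t) - h₂ (resState W₂ V₂ c t)‖ < ε

/-- `h'` is `h` with linearly transformed domain. -/
def LinTransformedDomain {ι₁ ι₂ od : Type*} [Fintype ι₂]
    (h : EuclideanSpace ℂ ι₁ → EuclideanSpace ℂ od)
    (h' : EuclideanSpace ℂ ι₂ → EuclideanSpace ℂ od) : Prop :=
  ∃ A : Matrix ι₁ ι₂ ℂ, ∀ x : EuclideanSpace ℂ ι₂, h' x = h (WithLp.toLp 2 (Matrix.mulVec A x))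

/-! A delay line of length `T` on `ℂⁿ ⊕ (ℂᵐ)ᵀ` stores the last `T` inputs in the blocks of
`(ℂᵐ)ᵀ`; it is driven by `λ U` with `U` a cyclic shift of the blocks, a permutation matrix and hence
unitary. Reading block `r` through `λ⁻ʳ Wʳ V` reproduces the terms `k < T` of the state series
`∑ₖ Wᵏ V c_{t-k}` exactly, and all later terms of both series are bounded by `‖V‖ M λᵏ`, so the two
states differ by at most `2 ‖V‖ M λᵀ / (1 - λ)`. Since all states of `R` lie in a fixed ball, uniform
continuity of `h` near that ball makes the outputs `ε`-close once `T` is large. -/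

open Matrix
open scoped Matrix.Norms.L2Operator

section Filter

variable {ι κ : Type*} [Fintype ι] [Fintype κ]

noncomputable def filterOutput (B : ℕ → Matrix ι κ ℂ) (c : ℤ → EuclideanSpace ℂ κ) (t : ℤ) :
    EuclideanSpace ℂ ι :=
  ∑' k : ℕ, WithLp.toLp 2 (B k *ᵥ c (t - k))

lemma resState_eq_filterOutput [DecidableEq ι] (W : Matrix ι ι ℂ) (V : Matrix ι κ ℂ)
    (c : ℤ → EuclideanSpace ℂ κ) (t : ℤ) :
    resState W V c t = filterOutput (fun k => W ^ k * V) c t := rfl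

variable {B B₁ B₂ : ℕ → Matrix ι κ ℂ} {c : ℤ → EuclideanSpace ℂ κ} {C M lam : ℝ} {t : ℤ}

lemma filterOutput_sub (hs₁ : Summable fun k : ℕ => WithLp.toLp 2 (B₁ k *ᵥ c (t - k)))
    (hs₂ : Summable fun k : ℕ => WithLp.toLp 2 (B₂ k *ᵥ c (t - k))) :
    filterOutput B₁ c t - filterOutput B₂ c t = filterOutput (B₁ - B₂) c t := by
  rw [filterOutput, filterOutput, ← hs₁.tsum_sub hs₂]
  simp [filterOutput, Matrix.sub_mulVec]

lemma mulVec_filterOutput {μ : Type*} [Fintype μ] [DecidableEq ι] (A : Matrix μ ι ℂ)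
    (hs : Summable fun k : ℕ => WithLp.toLp 2 (B k *ᵥ c (t - k))) :
    WithLp.toLp 2 (A *ᵥ filterOutput B c t) = filterOutput (fun k => A * B k) c t := by
  have hA : ∀ x : EuclideanSpace ℂ ι,
      WithLp.toLp 2 (A *ᵥ x) = (toEuclideanLin A).toContinuousLinearMap x := fun _ => rfl
  rw [filterOutput, hA, ContinuousLinearMap.map_tsum _ hs]
  simp [filterOutput, ← hA, Matrix.mulVec_mulVec]

variable [DecidableEq κ]

lemma norm_filterOutput_term_le (hB : ∀ k, ‖B k‖ ≤ C * lam ^ k)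
    (hc : ∀ s ≤ 0, ‖c s‖ ≤ M) (ht : t ≤ 0) (k : ℕ) :
    ‖WithLp.toLp 2 (B k *ᵥ c (t - k))‖ ≤ C * M * lam ^ k :=
  calc ‖WithLp.toLp 2 (B k *ᵥ c (t - k))‖ ≤ ‖B k‖ * ‖c (t - k)‖ :=
        (B k).l2_opNorm_mulVec _
    _ ≤ C * lam ^ k * M :=
        mul_le_mul (hB k) (hc _ (by omega)) (norm_nonneg _) ((norm_nonneg _).trans (hB k))
    _ = C * M * lam ^ k := by ring

lemma summable_filterOutput_terms (hlam0 : 0 ≤ lam) (hlam1 : lam < 1)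
    (hB : ∀ k, ‖B k‖ ≤ C * lam ^ k) (hc : ∀ s ≤ 0, ‖c s‖ ≤ M) (ht : t ≤ 0) :
    Summable fun k : ℕ => WithLp.toLp 2 (B k *ᵥ c (t - k)) :=
  Summable.of_norm_bounded ((summable_geometric_of_lt_one hlam0 hlam1).mul_left (C * M))
    (norm_filterOutput_term_le hB hc ht)

lemma norm_filterOutput_le (hlam0 : 0 ≤ lam) (hlam1 : lam < 1) (T : ℕ)
    (hB : ∀ k, ‖B k‖ ≤ C * lam ^ k) (hB0 : ∀ k < T, B k = 0)
    (hc : ∀ s ≤ 0, ‖c s‖ ≤ M) (ht : t ≤ 0) :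
    ‖filterOutput B c t‖ ≤ C * M / (1 - lam) * lam ^ T := by
  have hsplit : filterOutput B c t = ∑' k : ℕ, WithLp.toLp 2 (B (k + T) *ᵥ c (t - ↑(k + T))) := by
    rw [filterOutput, ← (summable_filterOutput_terms hlam0 hlam1 hB hc ht).sum_add_tsum_nat_add T,
      Finset.sum_eq_zero fun k hk => by simp [hB0 k (Finset.mem_range.mp hk)], zero_add]
  rw [hsplit, div_mul_eq_mul_div, div_eq_mul_inv]
  refine tsum_of_norm_bounded ((hasSum_geometric_of_lt_one hlam0 hlam1).mul_left _) fun k => ?_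
  calc _ ≤ C * M * lam ^ (k + T) := norm_filterOutput_term_le hB hc ht _
    _ = C * M * lam ^ T * lam ^ k := by ring

end Filter

section Reservoir

variable {ι ι₂ κ : Type*} [Fintype ι] [DecidableEq ι] [Fintype ι₂] [DecidableEq ι₂]
  [Fintype κ] [DecidableEq κ] {c : ℤ → EuclideanSpace ℂ κ} {C M lam : ℝ} {t : ℤ}

lemma norm_pow_mul_le {W : Matrix ι ι ℂ} (hW : ‖W‖ ≤ lam) (V : Matrix ι κ ℂ) (k : ℕ) :
    ‖W ^ k * V‖ ≤ ‖V‖ * lam ^ k := by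
  induction k with
  | zero => simp
  | succ k ih =>
    calc ‖W ^ (k + 1) * V‖ ≤ ‖W‖ * ‖W ^ k * V‖ := by
          rw [pow_succ', Matrix.mul_assoc]; exact l2_opNorm_mul _ _
      _ ≤ lam * (‖V‖ * lam ^ k) := mul_le_mul hW ih (norm_nonneg _) ((norm_nonneg W).trans hW)
      _ = ‖V‖ * lam ^ (k + 1) := by ring

lemma norm_resState_le {W : Matrix ι ι ℂ} (hW : ‖W‖ ≤ lam) (hlam1 : lam < 1) (V : Matrix ι κ ℂ)
    (hc : ∀ s ≤ 0, ‖c s‖ ≤ M) (ht : t ≤ 0) :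
    ‖resState W V c t‖ ≤ ‖V‖ * M / (1 - lam) := by
  simpa [resState_eq_filterOutput] using
    norm_filterOutput_le ((norm_nonneg W).trans hW) hlam1 0 (norm_pow_mul_le hW V) (by simp) hc ht

lemma norm_resState_sub_mulVec_resState_le {W : Matrix ι ι ℂ} {W₂ : Matrix ι₂ ι₂ ℂ}
    (hW : ‖W‖ ≤ lam) (hW₂ : ‖W₂‖ ≤ lam) (hlam1 : lam < 1)
    (V : Matrix ι κ ℂ) (V₂ : Matrix ι₂ κ ℂ) (A : Matrix ι ι₂ ℂ) (T : ℕ)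
    (hagree : ∀ k < T, A * (W₂ ^ k * V₂) = W ^ k * V)
    (hA : ∀ k, ‖A * (W₂ ^ k * V₂)‖ ≤ C * lam ^ k)
    (hc : ∀ s ≤ 0, ‖c s‖ ≤ M) (ht : t ≤ 0) :
    ‖resState W V c t - WithLp.toLp 2 (A *ᵥ resState W₂ V₂ c t)‖
      ≤ (‖V‖ + C) * M / (1 - lam) * lam ^ T := by
  have hlam0 : 0 ≤ lam := (norm_nonneg W).trans hW
  rw [resState_eq_filterOutput, resState_eq_filterOutput,
    mulVec_filterOutput A
      (summable_filterOutput_terms hlam0 hlam1 (norm_pow_mul_le hW₂ V₂) hc ht),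
    filterOutput_sub (summable_filterOutput_terms hlam0 hlam1 (norm_pow_mul_le hW V) hc ht)
      (summable_filterOutput_terms hlam0 hlam1 hA hc ht)]
  refine norm_filterOutput_le hlam0 hlam1 T (fun k => ?_) (fun k hk => by simp [hagree k hk])
    hc ht
  calc ‖W ^ k * V - A * (W₂ ^ k * V₂)‖ ≤ ‖W ^ k * V‖ + ‖A * (W₂ ^ k * V₂)‖ := norm_sub_le _ _
    _ ≤ ‖V‖ * lam ^ k + C * lam ^ k := add_le_add (norm_pow_mul_le hW V k) (hA k)
    _ = (‖V‖ + C) * lam ^ k := by ring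

end Reservoir

lemma Continuous.exists_pos_forall_norm_sub_lt {E F : Type*} [NormedAddCommGroup E]
    [ProperSpace E] [SeminormedAddCommGroup F] {h : E → F} (hh : Continuous h) (R : ℝ)
    {ε : ℝ} (hε : 0 < ε) :
    ∃ δ > 0, ∀ x y, ‖x‖ ≤ R → ‖x - y‖ < δ → ‖h x - h y‖ < ε := by
  obtain ⟨δ, hδ, hunif⟩ := Metric.uniformContinuousOn_iff.mp
    ((isCompact_closedBall (0 : E) (R + 1)).uniformContinuousOn_of_continuous hh.continuousOn)
    ε hε
  refine ⟨min δ 1, lt_min hδ one_pos, fun x y hx hxy => ?_⟩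
  have hy : ‖y‖ ≤ R + 1 := by
    calc ‖y‖ ≤ ‖x‖ + ‖x - y‖ := by simpa using norm_sub_le x (x - y)
      _ ≤ R + 1 := add_le_add hx ((hxy.trans_le (min_le_right _ _)).le)
  rw [← dist_eq_norm]
  exact hunif x (mem_closedBall_zero_iff.mpr (hx.trans (by linarith))) y
    (mem_closedBall_zero_iff.mpr hy) (by rw [dist_eq_norm]; exact hxy.trans_le (min_le_left _ _))

lemma exists_pos_mul_pow_lt {lam : ℝ} (hlam0 : 0 ≤ lam) (hlam1 : lam < 1) (K : ℝ) {δ : ℝ}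
    (hδ : 0 < δ) : ∃ T : ℕ, 0 < T ∧ K * lam ^ T < δ := by
  have hlim := (tendsto_pow_atTop_nhds_zero_of_lt_one hlam0 hlam1).const_mul K
  rw [mul_zero] at hlim
  exact ((Filter.eventually_gt_atTop 0).and (hlim.eventually (gt_mem_nhds hδ))).exists

section MatrixLemmas

variable {ι : Type*} [Fintype ι] [DecidableEq ι]

lemma mul_permMatrix_inv_pow_mul_submatrix_one {μ ν R : Type*} [CommRing R]
    (A : Matrix μ ι R) (σ : Equiv.Perm ι) (f : ν → ι) (k : ℕ) :
    A * ((σ⁻¹).permMatrix R ^ k * (1 : Matrix ι ι R).submatrix id f)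
      = A.submatrix id (⇑(σ ^ k) ∘ f) := by
  have hpow : (σ⁻¹).permMatrix R ^ k = ((σ ^ k)⁻¹).permMatrix R :=
    (map_pow (permMatrixHom (R := R)) σ k).symm
  rw [hpow, PEquiv.toMatrix_toPEquiv_mul, submatrix_submatrix, Function.id_comp,
    mul_submatrix_one]
  rfl

lemma permMatrix_mem_unitaryGroup (σ : Equiv.Perm ι) :
    σ.permMatrix ℂ ∈ unitaryGroup ι ℂ := by
  rw [mem_unitaryGroup_iff', star_eq_conjTranspose, conjTranspose_permMatrix, ← permMatrix_mul,
    mul_inv_cancel, permMatrix_one]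

lemma submatrix_mem_unitaryGroup {ι' : Type*} [Fintype ι'] [DecidableEq ι'] (e : ι' ≃ ι)
    {U : Matrix ι ι ℂ} (hU : U ∈ unitaryGroup ι ℂ) : U.submatrix e e ∈ unitaryGroup ι' ℂ := by
  rw [mem_unitaryGroup_iff', star_eq_conjTranspose, conjTranspose_submatrix,
    submatrix_mul_equiv, ← star_eq_conjTranspose, mem_unitaryGroup_iff'.mp hU,
    submatrix_one_equiv]

lemma norm_le_one_of_mem_unitary {E : Type*} [NormedRing E] [StarRing E] [CStarRing E] {U : E}
    (hU : U ∈ unitary E) : ‖U‖ ≤ 1 := by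
  rcases subsingleton_or_nontrivial E with _ | _
  · simp [Subsingleton.elim U 0]
  · exact (CStarRing.norm_of_mem_unitary hU).le

lemma norm_ofReal_smul_le_of_mem_unitaryGroup {U : Matrix ι ι ℂ} (hU : U ∈ unitaryGroup ι ℂ)
    {lam : ℝ} (hlam : 0 ≤ lam) : ‖(lam : ℂ) • U‖ ≤ lam := by
  rw [norm_smul, Complex.norm_real, Real.norm_of_nonneg hlam]
  exact mul_le_of_le_one_right hlam (norm_le_one_of_mem_unitary hU)

lemma submatrix_mul_pow_mul_submatrix {ι' κ μ R : Type*} [Fintype ι'] [DecidableEq ι']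
    [CommRing R] (e : ι' ≃ ι) (A : Matrix μ ι R) (X : Matrix ι ι R) (Y : Matrix ι κ R) (k : ℕ) :
    A.submatrix id e * ((X.submatrix e e) ^ k * Y.submatrix e id) = A * (X ^ k * Y) := by
  have hpow : (X.submatrix e e) ^ k = (X ^ k).submatrix e e := by
    simpa using (map_pow (reindexAlgEquiv R R e.symm) X k).symm
  rw [hpow, submatrix_mul_equiv, submatrix_mul_equiv, submatrix_id_id]

end MatrixLemmas

section DelayLine

open Fin.NatCast

variable {ι κ : Type*} (T : ℕ) [NeZero T]

def delayShift : Equiv.Perm (ι ⊕ Fin T × κ) :=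
  Equiv.sumCongr 1 (Equiv.prodCongr (Equiv.addRight 1) 1)

lemma delayShift_pow_apply (k : ℕ) (r : Fin T) (j : κ) :
    (delayShift (ι := ι) T ^ k) (Sum.inr (r, j)) = Sum.inr (r + (k : Fin T), j) := by
  induction k with
  | zero => simp
  | succ k ih =>
    rw [pow_succ', Equiv.Perm.mul_apply, ih]
    simp [delayShift, add_assoc]

variable [Fintype ι] [DecidableEq ι] [Fintype κ] [DecidableEq κ]

/- The summand `ι` of the state space `ι ⊕ Fin T × κ` is idle padding. Driven by `λ • delayU`,
block `r` of the delay line holds the sum of `λᵏ c_{t-k}` over `k ≡ r (mod T)`, which is why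
`delayReadout` reads it through `λ⁻ʳ Wʳ V`. -/

variable (ι κ) in
def delayU : Matrix (ι ⊕ Fin T × κ) (ι ⊕ Fin T × κ) ℂ :=
  (delayShift T)⁻¹.permMatrix ℂ

variable (ι κ) in
def delayV : Matrix (ι ⊕ Fin T × κ) κ ℂ :=
  (1 : Matrix (ι ⊕ Fin T × κ) (ι ⊕ Fin T × κ) ℂ).submatrix id fun j => Sum.inr (0, j)

noncomputable def delayReadout (W : Matrix ι ι ℂ) (V : Matrix ι κ ℂ) (lam : ℝ) :
    Matrix ι (ι ⊕ Fin T × κ) ℂ :=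
  fromCols 0 (of fun p x => ((lam : ℂ)⁻¹ ^ (x.1 : ℕ) • (W ^ (x.1 : ℕ) * V)) p x.2)

variable (W : Matrix ι ι ℂ) (V : Matrix ι κ ℂ) {lam : ℝ}

lemma delayReadout_mul_pow_mul (k : ℕ) :
    delayReadout T W V lam * (delayU ι κ T ^ k * delayV ι κ T)
      = (lam : ℂ)⁻¹ ^ (k % T) • (W ^ (k % T) * V) := by
  rw [delayU, delayV, mul_permMatrix_inv_pow_mul_submatrix_one]
  ext p j
  simp [delayReadout, delayShift_pow_apply, Fin.val_natCast]

lemma delayReadout_mul_smul_pow_mul (k : ℕ) :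
    delayReadout T W V lam * (((lam : ℂ) • delayU ι κ T) ^ k * delayV ι κ T)
      = ((lam : ℂ) ^ k * (lam : ℂ)⁻¹ ^ (k % T)) • (W ^ (k % T) * V) := by
  rw [smul_pow, Matrix.smul_mul, Matrix.mul_smul, delayReadout_mul_pow_mul, smul_smul]

lemma delayReadout_mul_smul_pow_mul_of_lt (hlam : lam ≠ 0) {k : ℕ} (hk : k < T) :
    delayReadout T W V lam * (((lam : ℂ) • delayU ι κ T) ^ k * delayV ι κ T) = W ^ k * V := by
  rw [delayReadout_mul_smul_pow_mul, Nat.mod_eq_of_lt hk, ← mul_pow,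
    mul_inv_cancel₀ (Complex.ofReal_ne_zero.mpr hlam), one_pow, one_smul]

lemma norm_delayReadout_mul_smul_pow_mul_le (hlam : 0 < lam) (hW : ‖W‖ ≤ lam) (k : ℕ) :
    ‖delayReadout T W V lam * (((lam : ℂ) • delayU ι κ T) ^ k * delayV ι κ T)‖
      ≤ ‖V‖ * lam ^ k := by
  rw [delayReadout_mul_smul_pow_mul, norm_smul, norm_mul, norm_pow, norm_pow, norm_inv,
    Complex.norm_real, Real.norm_of_nonneg hlam.le]
  calc lam ^ k * lam⁻¹ ^ (k % T) * ‖W ^ (k % T) * V‖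
      ≤ lam ^ k * lam⁻¹ ^ (k % T) * (‖V‖ * lam ^ (k % T)) := by
        gcongr; exact norm_pow_mul_le hW V _
    _ = ‖V‖ * lam ^ k := by
        rw [inv_pow]; field_simp

end DelayLine

theorem unitary_dilation_eps_close_general
    (n m d : ℕ) (W : Matrix (Fin n) (Fin n) ℂ) (V : Matrix (Fin n) (Fin m) ℂ)
    (h : EuclideanSpace ℂ (Fin n) → EuclideanSpace ℂ (Fin d)) (hh : Continuous h)
    (lam : ℝ) (hWlam : opNorm W = lam) (hlam0 : 0 < lam) (hlam1 : lam < 1)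
    (M : ℝ) (ε : ℝ) (hε : 0 < ε) :
    ∃ n' : ℕ, n ≤ n' ∧
      ∃ (U : Matrix (Fin n') (Fin n') ℂ) (V' : Matrix (Fin n') (Fin m) ℂ)
        (h' : EuclideanSpace ℂ (Fin n') → EuclideanSpace ℂ (Fin d)),
        U ∈ Matrix.unitaryGroup (Fin n') ℂ ∧
        Continuous h' ∧ LinTransformedDomain h h' ∧
        EpsClose M ε W V h ((lam : ℂ) • U) V' h' := by
  have hW : ‖W‖ ≤ lam := hWlam.le
  obtain ⟨δ, hδ, hclose⟩ := hh.exists_pos_forall_norm_sub_lt (‖V‖ * M / (1 - lam)) hε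
  obtain ⟨T, hT, hTδ⟩ := exists_pos_mul_pow_lt hlam0.le hlam1 ((‖V‖ + ‖V‖) * M / (1 - lam)) hδ
  have : NeZero T := ⟨hT.ne'⟩
  let e : Fin n ⊕ Fin T × Fin m ≃ Fin (n + T * m) :=
    (Equiv.sumCongr (Equiv.refl _) finProdFinEquiv).trans finSumFinEquiv
  let U₀ := delayU (Fin n) (Fin m) T
  let U := U₀.submatrix e.symm e.symm
  let V' := (delayV (Fin n) (Fin m) T).submatrix e.symm id
  let A := (delayReadout T W V lam).submatrix id e.symm
  have hU : U ∈ unitaryGroup (Fin (n + T * m)) ℂ :=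
    submatrix_mem_unitaryGroup _ (permMatrix_mem_unitaryGroup _)
  have hreadout (k : ℕ) : A * (((lam : ℂ) • U) ^ k * V') =
      delayReadout T W V lam * (((lam : ℂ) • U₀) ^ k * delayV (Fin n) (Fin m) T) := by
    rw [show (lam : ℂ) • U = ((lam : ℂ) • U₀).submatrix e.symm e.symm from rfl]
    exact submatrix_mul_pow_mul_submatrix e.symm _ _ _ k
  refine ⟨n + T * m, Nat.le_add_right _ _, U, V', fun x => h (WithLp.toLp 2 (A *ᵥ x)), hU,
    hh.comp (toEuclideanLin A).toContinuousLinearMap.continuous, ⟨A, fun _ => rfl⟩,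
    fun c hc t ht => hclose _ _ (norm_resState_le hW hlam1 V hc ht) ?_⟩
  refine (norm_resState_sub_mulVec_resState_le hW
    (norm_ofReal_smul_le_of_mem_unitaryGroup hU hlam0.le) hlam1 V V' A T (fun k hk => ?_)
    (fun k => ?_) hc ht).trans_lt hTδ
  · rw [hreadout]; exact delayReadout_mul_smul_pow_mul_of_lt T W V hlam0.ne' hk
  · rw [hreadout]; exact norm_delayReadout_mul_smul_pow_mul_le T W V hlam0 hW k

theorem unitary_dilation_eps_close
    (n m d : ℕ) (W : Matrix (Fin n) (Fin n) ℂ) (V : Matrix (Fin n) (Fin m) ℂ)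
    (h : EuclideanSpace ℂ (Fin n) → EuclideanSpace ℂ (Fin d)) (hh : Continuous h)
    (lam : ℝ) (hWlam : opNorm W = lam) (hlam0 : 0 < lam) (hlam1 : lam < 1)
    (M : ℝ) (hM : 0 < M) (ε : ℝ) (hε : 0 < ε) :
    ∃ n' : ℕ, n ≤ n' ∧
      ∃ (U : Matrix (Fin n') (Fin n') ℂ) (V' : Matrix (Fin n') (Fin m) ℂ)
        (h' : EuclideanSpace ℂ (Fin n') → EuclideanSpace ℂ (Fin d)),
        U ∈ Matrix.unitaryGroup (Fin n') ℂ ∧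
        Continuous h' ∧ LinTransformedDomain h h' ∧
        EpsClose M ε W V h ((lam : ℂ) • U) V' h' :=
  unitary_dilation_eps_close_general n m d W V h hh lam hWlam hlam0 hlam1 M ε hε
end

section
/- For every n×m real matrix V and every δ > 0 there exist a positive integer N, a positive integer k with gcd(k, n) = 1, and matrices F₁, …, F_k, each an n×m matrix all of whose entries lie in {−1, 1}, such that ‖V − (1/N) ∑_{j=1}^k F_j‖ < δ, where ‖·‖ denotes the operator norm. -/
/-- Operator norm of a real matrix w.r.t. Euclidean norms. -/
noncomputable def opNormR {ι κ : Type*} [Fintype ι] [Fintype κ] [DecidableEq κ]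
    (A : Matrix ι κ ℝ) : ℝ :=
  ‖LinearMap.toContinuousLinearMap (Matrix.toEuclideanLin A)‖

lemma opNormR_le_sqrt_sum_sq {ι κ : Type*} [Fintype ι] [Fintype κ] [DecidableEq κ]
    (A : Matrix ι κ ℝ) : opNormR A ≤ √(∑ i, ∑ j, A i j ^ 2) := by
  refine ContinuousLinearMap.opNorm_le_bound _ (Real.sqrt_nonneg _) fun x => ?_
  rw [LinearMap.coe_toContinuousLinearMap', EuclideanSpace.norm_eq, EuclideanSpace.norm_eq,
    ← Real.sqrt_mul (by positivity)]
  refine Real.sqrt_le_sqrt ?_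
  simp only [Matrix.toLpLin_apply, PiLp.toLp_apply, Matrix.mulVec, dotProduct,
    Real.norm_eq_abs, sq_abs]
  rw [Finset.sum_mul]
  exact Finset.sum_le_sum fun i _ => Finset.sum_mul_sq_le_sq_mul_sq _ _ _

lemma opNormR_le_of_abs_le {ι κ : Type*} [Fintype ι] [Fintype κ] [DecidableEq κ]
    (A : Matrix ι κ ℝ) {ε : ℝ} (hε : 0 ≤ ε) (hA : ∀ i j, |A i j| ≤ ε) :
    opNormR A ≤ √(Fintype.card ι * Fintype.card κ) * ε := by
  calc opNormR A ≤ √(∑ i, ∑ j, A i j ^ 2) := opNormR_le_sqrt_sum_sq A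
    _ ≤ √(∑ _i : ι, ∑ _j : κ, ε ^ 2) :=
      Real.sqrt_le_sqrt <| Finset.sum_le_sum fun i _ => Finset.sum_le_sum fun j _ =>
        sq_le_sq' (abs_le.mp (hA i j)).1 (abs_le.mp (hA i j)).2
    _ = √(Fintype.card ι * Fintype.card κ) * ε := by
      simp only [Finset.sum_const, Finset.card_univ, nsmul_eq_mul]
      rw [← mul_assoc, Real.sqrt_mul (by positivity), Real.sqrt_sq hε]

lemma sum_ite_val_lt_one_neg_one {k p : ℕ} (hp : p ≤ k) :
    ∑ j : Fin k, (if (j : ℕ) < p then (1 : ℝ) else -1) = 2 * p - k := by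
  rw [Finset.sum_ite, Finset.sum_const, Finset.sum_const, Finset.filter_not,
    Finset.card_sdiff_of_subset (Finset.filter_subset _ _), Fin.card_filter_val_lt,
    Finset.card_univ, Fintype.card_fin, min_eq_right hp]
  simp only [nsmul_eq_mul, mul_one, mul_neg_one, Nat.cast_sub hp]
  ring

lemma exists_signs_sum_near (k : ℕ) {y : ℝ} (hy : |y| ≤ k) :
    ∃ s : Fin k → ℝ, (∀ j, s j = 1 ∨ s j = -1) ∧ |y - ∑ j, s j| ≤ 2 := by
  obtain ⟨hy₁, hy₂⟩ := abs_le.mp hy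
  set p := ⌊(y + k) / 2⌋₊
  have hp : p ≤ k := Nat.floor_le_of_le (by linarith)
  have hp₁ : (p : ℝ) ≤ (y + k) / 2 := Nat.floor_le (by linarith)
  have hp₂ : (y + k) / 2 < p + 1 := Nat.lt_floor_add_one _
  refine ⟨fun j => if (j : ℕ) < p then 1 else -1, fun j => by dsimp only; split_ifs <;> simp, ?_⟩
  rw [sum_ite_val_lt_one_neg_one hp, abs_le]
  constructor <;> linarith

lemma exists_pm_one_matrices_near {ι κ : Type*} (V : Matrix ι κ ℝ) {N k : ℕ} (hN : 0 < N)
    (hk : ∀ i j, N * |V i j| ≤ k) :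
    ∃ F : Fin k → Matrix ι κ ℝ, (∀ t i j, F t i j = 1 ∨ F t i j = -1) ∧
      ∀ i j, |(V - (N : ℝ)⁻¹ • ∑ t, F t) i j| ≤ 2 / N := by
  have hN' : (0 : ℝ) < N := Nat.cast_pos.mpr hN
  choose s hs_sign hs_near using fun i j =>
    exists_signs_sum_near k (y := N * V i j) (by rw [abs_mul, Nat.abs_cast]; exact hk i j)
  refine ⟨fun t => Matrix.of fun i j => s i j t, fun t i j => hs_sign i j t, fun i j => ?_⟩
  have hentry : (V - (N : ℝ)⁻¹ • ∑ t, Matrix.of fun i j => s i j t) i j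
      = (N : ℝ)⁻¹ * (N * V i j - ∑ t, s i j t) := by
    simp only [Matrix.sub_apply, Matrix.smul_apply, Matrix.sum_apply, Matrix.of_apply, smul_eq_mul]
    field_simp
  rw [hentry, abs_mul, abs_inv, Nat.abs_cast, div_eq_inv_mul]
  exact mul_le_mul_of_nonneg_left (hs_near i j) (by positivity)

lemma exists_coprime_ge {n : ℕ} (hn : 0 < n) (r : ℝ) :
    ∃ k : ℕ, 0 < k ∧ Nat.gcd k n = 1 ∧ r ≤ k := by
  refine ⟨n * ⌈r⌉₊ + 1, Nat.succ_pos _, ?_, ?_⟩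
  · exact (Nat.coprime_mul_left_add_left 1 n _).mpr (Nat.coprime_one_left n)
  · calc r ≤ ⌈r⌉₊ := Nat.le_ceil r
      _ ≤ (n * ⌈r⌉₊ + 1 : ℕ) := by
        exact_mod_cast (Nat.le_mul_of_pos_left _ hn).trans (Nat.le_succ _)

theorem approx_real_matrix_by_pm_one_general
    (n m : ℕ) (hn : 0 < n) (V : Matrix (Fin n) (Fin m) ℝ)
    (δ : ℝ) (hδ : 0 < δ) :
    ∃ (N k : ℕ), 0 < N ∧ 0 < k ∧ Nat.gcd k n = 1 ∧
      ∃ F : Fin k → Matrix (Fin n) (Fin m) ℝ,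
        (∀ (j : Fin k) (i : Fin n) (l : Fin m), F j i l = 1 ∨ F j i l = -1) ∧
        opNormR (V - (N : ℝ)⁻¹ • ∑ j, F j) < δ := by
  obtain ⟨C, hC⟩ := (Set.finite_range fun p : Fin n × Fin m => |V p.1 p.2|).bddAbove
  obtain ⟨N, hN⟩ := exists_nat_gt (2 * √(n * m) / δ)
  have hN₀ : (0 : ℝ) < N := lt_of_le_of_lt (by positivity) hN
  obtain ⟨k, hk, hkn, hCk⟩ := exists_coprime_ge hn (N * C)
  obtain ⟨F, hF, hFV⟩ := exists_pm_one_matrices_near V (Nat.cast_pos.mp hN₀) fun i l =>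
    (mul_le_mul_of_nonneg_left (hC ⟨(i, l), rfl⟩) hN₀.le).trans hCk
  refine ⟨N, k, Nat.cast_pos.mp hN₀, hk, hkn, F, hF, ?_⟩
  calc opNormR (V - (N : ℝ)⁻¹ • ∑ j, F j) ≤ √(n * m) * (2 / N) := by
        simpa using opNormR_le_of_abs_le _ (by positivity) hFV
    _ < δ := by
      rw [div_lt_iff₀ hδ] at hN
      rw [mul_div_assoc', div_lt_iff₀ hN₀]
      linarith

theorem approx_real_matrix_by_pm_one
    (n m : ℕ) (hn : 0 < n) (hm : 0 < m) (V : Matrix (Fin n) (Fin m) ℝ)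
    (δ : ℝ) (hδ : 0 < δ) :
    ∃ (N k : ℕ), 0 < N ∧ 0 < k ∧ Nat.gcd k n = 1 ∧
      ∃ F : Fin k → Matrix (Fin n) (Fin m) ℝ,
        (∀ (j : Fin k) (i : Fin n) (l : Fin m), F j i l = 1 ∨ F j i l = -1) ∧
        opNormR (V - (N : ℝ)⁻¹ • ∑ j, F j) < δ :=
  approx_real_matrix_by_pm_one_general n m hn V δ hδ
end

section
/- Let W be an n×n complex matrix with operator norm ‖W‖ ≤ 1 and let N ≥ 1 be an integer. Then there exists an (N+1)n × (N+1)n unitary complex matrix U such that W^k = J* U^k J for every k with 1 ≤ k ≤ N, where J : ℂ^n → ℂ^{(N+1)n} is the isometric embedding onto the first n coordinates and J* is its adjoint (the projection onto the first n coordinates). -/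
/-!
Egerváry's construction. Let `D = (1 - W*W)^{1/2}` and `D' = (1 - WW*)^{1/2}` be the defect
operators of the contraction `W`. The Julia relations `W*W + D² = 1`, `WW* + D'² = 1` and
`W*D' = DW*` (the last because on the finite spectra both square roots are one and the same
interpolating polynomial, and `W*` intertwines `1 - WW*` with `1 - W*W`) make the columns of the
block matrix `U = egervaryDilation W D D' (N - 1)` orthonormal. Its first block column is pushed
one block down the shift at each step and reaches the last block, the only one that feeds back
into the top row, only after `N` steps; hence the top-left block of `U^k` is `W^k` for `k ≤ N`.
-/

open Polynomial in
theorem SemiconjBy.aeval {R A : Type*} [CommSemiring R] [Semiring A] [Algebra R A]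
    {x a b : A} (h : SemiconjBy x a b) (p : R[X]) :
    SemiconjBy x (Polynomial.aeval a p) (Polynomial.aeval b p) := by
  induction p using Polynomial.induction_on' with
  | add p q hp hq => simpa only [map_add] using hp.add_right hq
  | monomial k c =>
    simpa only [aeval_monomial] using
      SemiconjBy.mul_right (Algebra.commute_algebraMap_right c x) (h.pow_right k)

section Defect
variable {A : Type*} [CStarAlgebra A]

theorem SemiconjBy.cfc_of_finite {x a b : A} (h : SemiconjBy x a b) (f : ℝ → ℝ)
    (ha : IsSelfAdjoint a) (hb : IsSelfAdjoint b)
    (ha' : (spectrum ℝ a).Finite) (hb' : (spectrum ℝ b).Finite) :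
    SemiconjBy x (cfc f a) (cfc f b) := by
  classical
  set s := (ha'.union hb').toFinset
  set p := Lagrange.interpolate s id f
  have hp : ∀ c : A, IsSelfAdjoint c → spectrum ℝ c ⊆ ↑s → cfc f c = Polynomial.aeval c p := by
    intro c hc hcs
    rw [← cfc_polynomial p c]
    exact cfc_congr fun t ht =>
      (Lagrange.eval_interpolate_at_node f (Set.injOn_id _) (hcs ht)).symm
  rw [hp a ha (by simp [s]), hp b hb (by simp [s])]
  exact h.aeval p

variable [PartialOrder A] [StarOrderedRing A]

theorem one_sub_star_mul_self_nonneg {x : A} (hx : ‖x‖ ≤ 1) : 0 ≤ 1 - star x * x := by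
  rw [sub_nonneg]
  calc star x * x ≤ algebraMap ℝ A (‖x‖ ^ 2) := CStarAlgebra.star_mul_le_algebraMap_norm_sq
    _ ≤ algebraMap ℝ A 1 := algebraMap_mono A (pow_le_one₀ (norm_nonneg x) hx)
    _ = 1 := map_one _

noncomputable def defect (x : A) : A := CFC.sqrt (1 - star x * x)

theorem isSelfAdjoint_defect (x : A) : IsSelfAdjoint (defect x) :=
  IsSelfAdjoint.of_nonneg (CFC.sqrt_nonneg _)

theorem defect_mul_self {x : A} (hx : ‖x‖ ≤ 1) : defect x * defect x = 1 - star x * x :=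
  CFC.sqrt_mul_sqrt_self _ (one_sub_star_mul_self_nonneg hx)

theorem semiconjBy_defect {x : A} (hx : ‖x‖ ≤ 1) (hA : ∀ a : A, (spectrum ℝ a).Finite) :
    SemiconjBy x (defect x) (defect (star x)) := by
  have hx' : ‖star x‖ ≤ 1 := by rwa [norm_star]
  have h : SemiconjBy x (1 - star x * x) (1 - star (star x) * star x) := by
    simp only [SemiconjBy, star_star]; noncomm_ring
  rw [defect, defect, CFC.sqrt_eq_real_sqrt _ (one_sub_star_mul_self_nonneg hx),
    CFC.sqrt_eq_real_sqrt _ (one_sub_star_mul_self_nonneg hx'), cfcₙ_eq_cfc, cfcₙ_eq_cfc]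
  exact h.cfc_of_finite _ (by cfc_tac) (by cfc_tac) (hA _) (hA _)

end Defect

namespace Matrix

section Powers
variable {R l n : Type*} [Ring R] [Fintype l] [Fintype n] [DecidableEq l] [DecidableEq n]

theorem toBlocks_fromBlocks_pow {A : Matrix l l R} {B : Matrix l n R} {C : Matrix n l R}
    {D : Matrix n n R} {m : ℕ} (h : ∀ i < m, B * D ^ i * C = 0) {k : ℕ} (hk : k ≤ m + 1) :
    (fromBlocks A B C D ^ k).toBlocks₁₁ = A ^ k ∧
      (fromBlocks A B C D ^ k).toBlocks₂₁ =
        ∑ i ∈ Finset.range k, D ^ i * C * A ^ (k - 1 - i) := by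
  induction k with
  | zero => simp [← fromBlocks_one]
  | succ k ih =>
    obtain ⟨ih₁, ih₂⟩ := ih (by omega)
    rw [pow_succ', ← fromBlocks_toBlocks (fromBlocks A B C D ^ k), fromBlocks_multiply,
      toBlocks_fromBlocks₁₁, toBlocks_fromBlocks₂₁, ih₁, ih₂, Matrix.mul_sum, Matrix.mul_sum,
      Finset.sum_range_succ']
    refine ⟨?_, ?_⟩
    · rw [Finset.sum_eq_zero fun i hi => ?_, add_zero, pow_succ']
      rw [← Matrix.mul_assoc, ← Matrix.mul_assoc,
        h i ((Finset.mem_range.mp hi).trans_le (by omega)), Matrix.zero_mul]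
    · rw [add_comm, pow_zero, Matrix.one_mul, Nat.sub_zero, Nat.add_sub_cancel]
      congr 1
      refine Finset.sum_congr rfl fun i _ => ?_
      rw [← Matrix.mul_assoc, ← Matrix.mul_assoc, ← pow_succ']
      congr 2
      omega

theorem toBlocks₁₁_fromBlocks_pow {A : Matrix l l R} {B : Matrix l n R} {C : Matrix n l R}
    {D : Matrix n n R} {m : ℕ} (h : ∀ i < m, B * D ^ i * C = 0) {k : ℕ} (hk : k ≤ m + 1) :
    (fromBlocks A B C D ^ k).toBlocks₁₁ = A ^ k :=
  (toBlocks_fromBlocks_pow h hk).1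

end Powers

section Unitary
variable {R l n : Type*} [CommRing R] [StarRing R] [Fintype l] [Fintype n] [DecidableEq l]
  [DecidableEq n]

theorem fromBlocks_mem_unitaryGroup {A : Matrix l l R} {B : Matrix l n R} {C : Matrix n l R}
    {D : Matrix n n R} (h₁₁ : Aᴴ * A + Cᴴ * C = 1) (h₁₂ : Aᴴ * B + Cᴴ * D = 0)
    (h₂₂ : Bᴴ * B + Dᴴ * D = 1) : fromBlocks A B C D ∈ unitaryGroup (l ⊕ n) R := by
  have h₂₁ : Bᴴ * A + Dᴴ * C = 0 := by
    simpa [conjTranspose_add, conjTranspose_mul] using congrArg conjTranspose h₁₂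
  rw [mem_unitaryGroup_iff', star_eq_conjTranspose, fromBlocks_conjTranspose, fromBlocks_multiply,
    h₁₁, h₁₂, h₂₁, h₂₂, fromBlocks_one]

theorem reindex_mem_unitaryGroup {n' : Type*} [Fintype n'] [DecidableEq n'] (e : n ≃ n')
    {U : Matrix n n R} (hU : U ∈ unitaryGroup n R) : reindex e e U ∈ unitaryGroup n' R := by
  rw [mem_unitaryGroup_iff'] at hU ⊢
  rw [star_eq_conjTranspose, conjTranspose_reindex, reindex_apply, reindex_apply,
    submatrix_mul_equiv, ← star_eq_conjTranspose, hU, submatrix_one_equiv]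

end Unitary

section Blocks
variable (R ι : Type*) {β : Type*} [CommRing R] [StarRing R] [Fintype ι] [DecidableEq ι]
  [DecidableEq β]

def blockIncl (j : β) : Matrix (β × ι) ι R :=
  (1 : Matrix (β × ι) (β × ι) R).submatrix id (Prod.mk j)

def blockShift (m : ℕ) : Matrix (Fin (m + 1) × ι) (Fin (m + 1) × ι) R :=
  ∑ j : Fin m, blockIncl R ι j.succ * (blockIncl R ι j.castSucc)ᴴ

variable {R ι}

theorem blockIncl_conjTranspose_mul_blockIncl [Fintype β] (j l : β) :
    (blockIncl R ι j)ᴴ * blockIncl R ι l = if j = l then 1 else 0 := by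
  rw [blockIncl, blockIncl, conjTranspose_submatrix, conjTranspose_one,
    ← submatrix_mul _ _ _ _ _ Function.bijective_id, mul_one]
  ext a b
  split_ifs with h <;> simp [one_apply, h]

@[simp]
theorem blockIncl_conjTranspose_mul_self [Fintype β] (j : β) :
    (blockIncl R ι j)ᴴ * blockIncl R ι j = 1 := by
  simp [blockIncl_conjTranspose_mul_blockIncl]

theorem blockIncl_conjTranspose_mul_blockIncl_of_ne [Fintype β] {j l : β} (h : j ≠ l) :
    (blockIncl R ι j)ᴴ * blockIncl R ι l = 0 := by
  simp [blockIncl_conjTranspose_mul_blockIncl, h]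

theorem sum_blockIncl_mul_conjTranspose [Fintype β] :
    ∑ j : β, blockIncl R ι j * (blockIncl R ι j)ᴴ = 1 := by
  ext ⟨j, a⟩ ⟨l, b⟩
  simp only [sum_apply, mul_apply]
  simp [blockIncl, one_apply, apply_ite star, ite_and]

variable {m : ℕ}

theorem blockShift_mul_blockIncl_castSucc (j : Fin m) :
    blockShift R ι m * blockIncl R ι j.castSucc = blockIncl R ι j.succ := by
  rw [blockShift, Matrix.sum_mul, Finset.sum_eq_single j (fun k _ hk => ?_) (by simp),
    Matrix.mul_assoc, blockIncl_conjTranspose_mul_self, Matrix.mul_one]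
  rw [Matrix.mul_assoc, blockIncl_conjTranspose_mul_blockIncl_of_ne (by simpa using hk),
    Matrix.mul_zero]

theorem blockIncl_zero_conjTranspose_mul_blockShift :
    (blockIncl R ι (0 : Fin (m + 1)))ᴴ * blockShift R ι m = 0 := by
  rw [blockShift, Matrix.mul_sum]
  refine Finset.sum_eq_zero fun j _ => ?_
  rw [← Matrix.mul_assoc, blockIncl_conjTranspose_mul_blockIncl_of_ne (Fin.succ_ne_zero j).symm,
    Matrix.zero_mul]

theorem blockShift_conjTranspose_mul_blockIncl_succ (j : Fin m) :
    (blockShift R ι m)ᴴ * blockIncl R ι j.succ = blockIncl R ι j.castSucc := by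
  rw [blockShift, conjTranspose_sum, Matrix.sum_mul,
    Finset.sum_eq_single j (fun k _ hk => ?_) (by simp), conjTranspose_mul,
    conjTranspose_conjTranspose, Matrix.mul_assoc, blockIncl_conjTranspose_mul_self,
    Matrix.mul_one]
  rw [conjTranspose_mul, conjTranspose_conjTranspose, Matrix.mul_assoc,
    blockIncl_conjTranspose_mul_blockIncl_of_ne (by simpa using hk), Matrix.mul_zero]

theorem blockShift_conjTranspose_mul_blockShift :
    (blockShift R ι m)ᴴ * blockShift R ι m =
      ∑ j : Fin m, blockIncl R ι j.castSucc * (blockIncl R ι j.castSucc)ᴴ := by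
  nth_rw 2 [blockShift]
  simp only [Matrix.mul_sum, ← Matrix.mul_assoc, blockShift_conjTranspose_mul_blockIncl_succ]

theorem sub_mul_pow_mul_blockIncl_zero (X : Matrix (Fin (m + 1) × ι) ι R) {i : ℕ} (hi : i ≤ m) :
    (blockShift R ι m - X * (blockIncl R ι (Fin.last m))ᴴ) ^ i *
        blockIncl R ι (0 : Fin (m + 1)) = blockIncl R ι ⟨i, by omega⟩ := by
  induction i with
  | zero => rw [pow_zero, Matrix.one_mul]; rfl
  | succ i ih =>
    have hcast : (⟨i, by omega⟩ : Fin (m + 1)) = Fin.castSucc ⟨i, hi⟩ := rfl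
    rw [pow_succ', Matrix.mul_assoc, ih (by omega), hcast, Matrix.sub_mul, Matrix.mul_assoc,
      blockIncl_conjTranspose_mul_blockIncl_of_ne (Fin.castSucc_lt_last _).ne', Matrix.mul_zero,
      sub_zero, blockShift_mul_blockIncl_castSucc]
    rfl

theorem blockIncl_zero_conjTranspose_mul_blockShift_sub (X : Matrix ι (Fin (m + 1) × ι) R) :
    (blockIncl R ι (0 : Fin (m + 1)))ᴴ * (blockShift R ι m - blockIncl R ι 0 * X) = -X := by
  rw [Matrix.mul_sub, blockIncl_zero_conjTranspose_mul_blockShift, ← Matrix.mul_assoc,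
    blockIncl_conjTranspose_mul_self, Matrix.one_mul, zero_sub]

theorem blockShift_sub_conjTranspose_mul_self (X : Matrix ι (Fin (m + 1) × ι) R) :
    (blockShift R ι m - blockIncl R ι 0 * X)ᴴ * (blockShift R ι m - blockIncl R ι 0 * X) =
      (blockShift R ι m)ᴴ * blockShift R ι m + Xᴴ * X := by
  have hS : (blockShift R ι m)ᴴ * blockIncl R ι (0 : Fin (m + 1)) = 0 := by
    simpa using congrArg conjTranspose
      (blockIncl_zero_conjTranspose_mul_blockShift (R := R) (ι := ι) (m := m))
  rw [conjTranspose_sub, conjTranspose_mul, Matrix.sub_mul, Matrix.mul_assoc Xᴴ,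
    blockIncl_zero_conjTranspose_mul_blockShift_sub, Matrix.mul_sub, ← Matrix.mul_assoc _ _ X, hS,
    Matrix.zero_mul, sub_zero, Matrix.mul_neg, sub_neg_eq_add]

end Blocks

section Dilation
variable {R ι : Type*} [CommRing R] [StarRing R] [Fintype ι] [DecidableEq ι]

/-- Used with `D`, `D'` the defects of `W`. In `(m + 2) × (m + 2)` blocks:
```
⎡ W  0  ⋯  0  D'  ⎤
⎢ D  0  ⋯  0  -W* ⎥
⎢ 0  1         0  ⎥
⎢      ⋱       ⋮  ⎥
⎣ 0      1     0  ⎦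
```
-/
def egervaryDilation (W D D' : Matrix ι ι R) (m : ℕ) :
    Matrix (ι ⊕ Fin (m + 1) × ι) (ι ⊕ Fin (m + 1) × ι) R :=
  fromBlocks W (D' * (blockIncl R ι (Fin.last m))ᴴ) (blockIncl R ι (0 : Fin (m + 1)) * D)
    (blockShift R ι m - blockIncl R ι (0 : Fin (m + 1)) * Wᴴ * (blockIncl R ι (Fin.last m))ᴴ)

theorem toBlocks₁₁_egervaryDilation_pow (W D D' : Matrix ι ι R) {m k : ℕ} (hk : k ≤ m + 1) :
    (egervaryDilation W D D' m ^ k).toBlocks₁₁ = W ^ k := by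
  refine toBlocks₁₁_fromBlocks_pow (fun i hi => ?_) hk
  rw [← Matrix.mul_assoc, Matrix.mul_assoc (D' * _), sub_mul_pow_mul_blockIncl_zero _ hi.le,
    Matrix.mul_assoc D', blockIncl_conjTranspose_mul_blockIncl_of_ne (Fin.ne_of_gt hi),
    Matrix.mul_zero, Matrix.zero_mul]

theorem egervaryDilation_mem_unitaryGroup {W D D' : Matrix ι ι R}
    (h₁₁ : Wᴴ * W + Dᴴ * D = 1) (h₁₂ : Wᴴ * D' = Dᴴ * Wᴴ) (h₂₂ : D'ᴴ * D' + W * Wᴴ = 1)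
    (m : ℕ) :
    egervaryDilation W D D' m ∈ unitaryGroup (ι ⊕ Fin (m + 1) × ι) R := by
  set e₀ := blockIncl R ι (0 : Fin (m + 1))
  set eₗ := blockIncl R ι (Fin.last m)
  refine fromBlocks_mem_unitaryGroup ?_ ?_ ?_
  · rw [conjTranspose_mul, Matrix.mul_assoc, ← Matrix.mul_assoc e₀ᴴ,
      blockIncl_conjTranspose_mul_self, Matrix.one_mul, h₁₁]
  · rw [Matrix.mul_assoc e₀, conjTranspose_mul, Matrix.mul_assoc,
      blockIncl_zero_conjTranspose_mul_blockShift_sub, ← Matrix.mul_assoc, h₁₂, Matrix.mul_neg,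
      Matrix.mul_assoc, add_neg_cancel]
  · rw [Matrix.mul_assoc e₀, blockShift_sub_conjTranspose_mul_self,
      blockShift_conjTranspose_mul_blockShift]
    have hcorner : ∀ Y : Matrix ι ι R, (Y * eₗᴴ)ᴴ * (Y * eₗᴴ) = eₗ * (Yᴴ * Y) * eₗᴴ := by
      intro Y
      rw [conjTranspose_mul, conjTranspose_conjTranspose, Matrix.mul_assoc, Matrix.mul_assoc,
        ← Matrix.mul_assoc Yᴴ, Matrix.mul_assoc]
    rw [hcorner, hcorner, conjTranspose_conjTranspose, add_left_comm, ← Matrix.add_mul,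
      ← Matrix.mul_add, h₂₂, Matrix.mul_one, ← sum_blockIncl_mul_conjTranspose,
      Fin.sum_univ_castSucc]

end Dilation

open scoped Matrix.Norms.L2Operator MatrixOrder in
theorem exists_mem_unitaryGroup_toBlocks₁₁_pow_eq {ι : Type*} [Fintype ι] [DecidableEq ι]
    {W : Matrix ι ι ℂ} (hW : ‖W‖ ≤ 1) (m : ℕ) :
    ∃ U ∈ unitaryGroup (ι ⊕ Fin (m + 1) × ι) ℂ, ∀ k ≤ m + 1, (U ^ k).toBlocks₁₁ = W ^ k := by
  have hW' : ‖star W‖ ≤ 1 := by rwa [norm_star]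
  have h₁₂ := (semiconjBy_defect hW' fun _ => finite_real_spectrum).eq
  rw [star_star] at h₁₂
  refine ⟨egervaryDilation W (defect W) (defect (star W)) m, ?_,
    fun k hk => toBlocks₁₁_egervaryDilation_pow _ _ _ hk⟩
  refine egervaryDilation_mem_unitaryGroup ?_ ?_ ?_ m <;> simp only [← star_eq_conjTranspose]
  · rw [(isSelfAdjoint_defect W).star_eq, defect_mul_self hW, add_sub_cancel]
  · rw [(isSelfAdjoint_defect W).star_eq, h₁₂]
  · rw [(isSelfAdjoint_defect (star W)).star_eq, defect_mul_self hW', star_star, sub_add_cancel]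

end Matrix

theorem egervary_dilation_general
    (n N : ℕ) (W : Matrix (Fin n) (Fin n) ℂ) (hW : opNorm W ≤ 1) :
    ∃ U : Matrix (Fin n ⊕ Fin (N * n)) (Fin n ⊕ Fin (N * n)) ℂ,
      U ∈ Matrix.unitaryGroup (Fin n ⊕ Fin (N * n)) ℂ ∧
      ∀ k : ℕ, 1 ≤ k → k ≤ N → W ^ k = (U ^ k).submatrix Sum.inl Sum.inl := by
  rcases N with _ | m
  · exact ⟨1, one_mem _, fun k _ hk => by omega⟩
  obtain ⟨U, hU, hpow⟩ := Matrix.exists_mem_unitaryGroup_toBlocks₁₁_pow_eq hW m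
  let e : Fin n ⊕ Fin (m + 1) × Fin n ≃ Fin n ⊕ Fin ((m + 1) * n) :=
    Equiv.sumCongr (Equiv.refl _) finProdFinEquiv
  refine ⟨Matrix.reindex e e U, Matrix.reindex_mem_unitaryGroup e hU, fun k _ hk => ?_⟩
  rw [← Matrix.coe_reindexAlgEquiv ℂ ℂ, ← map_pow]
  exact (hpow k hk).symm

theorem egervary_dilation
    (n N : ℕ) (hN : 1 ≤ N) (W : Matrix (Fin n) (Fin n) ℂ) (hW : opNorm W ≤ 1) :
    ∃ U : Matrix (Fin n ⊕ Fin (N * n)) (Fin n ⊕ Fin (N * n)) ℂ,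
      U ∈ Matrix.unitaryGroup (Fin n ⊕ Fin (N * n)) ℂ ∧
      ∀ k : ℕ, 1 ≤ k → k ≤ N → W ^ k = (U ^ k).submatrix Sum.inl Sum.inl :=
  egervary_dilation_general n N W hW
end

section
/- For all positive integers n and m there exists a basis of the complex vector space of n×m complex matrices consisting of nm matrices each of whose entries lies in {−1, 1}. -/
/-!
Over a commutative ring in which `2` is a unit, the all-ones vector `𝟙` together with the vectors
`𝟙 - 2 eₖ` for `k ≠ k₀` span `R^ι`: each such `eₖ` is `(𝟙 - (𝟙 - 2 eₖ)) / 2`, and then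
`e_{k₀} = 𝟙 - ∑_{k ≠ k₀} eₖ`. Having `card ι` elements, the family is a basis, and its vectors
have all coordinates in `{1, -1}`. Transporting it along the standard basis of the matrix space,
indexed by `Fin (n * m)`, gives the required basis.
-/

open Module Submodule

section PmOneFamily

variable {ι : Type*} [DecidableEq ι]

def pmOneFamily (R : Type*) [CommRing R] (k₀ k : ι) : ι → R :=
  if k = k₀ then 1 else Function.update 1 k (-1)

lemma pmOneFamily_apply_eq_one_or_neg_one {R : Type*} [CommRing R] (k₀ k j : ι) :
    pmOneFamily R k₀ k j = 1 ∨ pmOneFamily R k₀ k j = -1 := by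
  unfold pmOneFamily
  split_ifs
  · exact .inl rfl
  · rw [Function.update_apply]
    split_ifs <;> simp

variable {R : Type*} [CommRing R] [Fintype ι]

lemma top_le_span_range_pmOneFamily (h2 : IsUnit (2 : R)) (k₀ : ι) :
    ⊤ ≤ span R (Set.range (pmOneFamily R k₀)) := by
  set S := span R (Set.range (pmOneFamily R k₀))
  have one_mem : (1 : ι → R) ∈ S := subset_span ⟨k₀, if_pos rfl⟩
  have single_mem_of_ne {k : ι} (hk : k ≠ k₀) : Pi.single k (1 : R) ∈ S := by
    have hb : pmOneFamily R k₀ k = 1 - (2 : R) • Pi.single k (1 : R) := by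
      ext j
      rcases eq_or_ne j k with rfl | hj <;> simp [pmOneFamily, *]
      norm_num
    have : (2 : R) • Pi.single k (1 : R) ∈ S := by
      rw [show (2 : R) • Pi.single k (1 : R) = 1 - pmOneFamily R k₀ k by rw [hb]; abel]
      exact sub_mem one_mem (subset_span ⟨k, rfl⟩)
    exact (smul_mem_iff_of_isUnit S h2).mp this
  have single_mem (k : ι) : Pi.single k (1 : R) ∈ S := by
    rcases eq_or_ne k k₀ with rfl | hk
    · have hsum := Finset.univ_sum_single (fun _ : ι => (1 : R))
      rw [← Finset.add_sum_erase _ _ (Finset.mem_univ k), ← eq_sub_iff_add_eq] at hsum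
      rw [hsum]
      exact sub_mem one_mem (sum_mem fun j hj => single_mem_of_ne (Finset.ne_of_mem_erase hj))
    · exact single_mem_of_ne hk
  rw [← (Pi.basisFun R ι).span_eq, span_le]
  rintro _ ⟨k, rfl⟩
  simpa using single_mem k

lemma exists_basis_pi_apply_eq_one_or_neg_one [Nontrivial R] (h2 : IsUnit (2 : R)) :
    ∃ b : Basis ι R (ι → R), ∀ k j, b k j = 1 ∨ b k j = -1 := by
  cases isEmpty_or_nonempty ι with
  | inl _ => exact ⟨Pi.basisFun R ι, fun k => isEmptyElim k⟩
  | inr h =>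
    obtain ⟨k₀⟩ := h
    refine ⟨basisOfTopLeSpanOfCardEqFinrank _ (top_le_span_range_pmOneFamily h2 k₀)
      (finrank_fintype_fun_eq_card R).symm, fun k j => ?_⟩
    rw [coe_basisOfTopLeSpanOfCardEqFinrank]
    exact pmOneFamily_apply_eq_one_or_neg_one k₀ k j

lemma Module.Basis.exists_basis_repr_apply_eq_one_or_neg_one {M : Type*} [AddCommGroup M]
    [Module R M] [Nontrivial R] (h2 : IsUnit (2 : R)) (v : Basis ι R M) :
    ∃ b : Basis ι R M, ∀ k j, v.repr (b k) j = 1 ∨ v.repr (b k) j = -1 := by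
  obtain ⟨b, hb⟩ := exists_basis_pi_apply_eq_one_or_neg_one (ι := ι) h2
  refine ⟨b.map v.equivFun.symm, fun k j => ?_⟩
  rw [Basis.map_apply, ← v.equivFun_apply, LinearEquiv.apply_symm_apply]
  exact hb k j

end PmOneFamily

theorem exists_pm_one_basis_general
    (n m : ℕ) :
    ∃ b : Module.Basis (Fin (n * m)) ℂ (Matrix (Fin n) (Fin m) ℂ),
      ∀ (i : Fin (n * m)) (r : Fin n) (c : Fin m), b i r c = 1 ∨ b i r c = -1 := by
  let v := (Matrix.stdBasis ℂ (Fin n) (Fin m)).reindex finProdFinEquiv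
  obtain ⟨b, hb⟩ := v.exists_basis_repr_apply_eq_one_or_neg_one two_ne_zero.isUnit
  refine ⟨b, fun i r c => ?_⟩
  simpa [v, Matrix.stdBasis] using hb i (finProdFinEquiv (r, c))

theorem exists_pm_one_basis
    (n m : ℕ) (hn : 0 < n) (hm : 0 < m) :
    ∃ b : Module.Basis (Fin (n * m)) ℂ (Matrix (Fin n) (Fin m) ℂ),
      ∀ (i : Fin (n * m)) (r : Fin n) (c : Fin m), b i r c = 1 ∨ b i r c = -1 :=
  exists_pm_one_basis_general n m
end

section
/- Let R = (W, V, h) be a linear reservoir system of dimensions (n, m, d) whose dynamic coupling W is a contractive full-cycle permutation, let E₁, …, E_{nm} be a basis of the space of n×m complex matrices with all entries in {−1, 1}, and write V = ∑_{i=1}^{nm} a_i E_i with a_i ∈ ℂ. Define R' = (W', V', h') of dimensions (n²m, m, d) by: W' block-diagonal with nm identical blocks equal to W, V' the vertical stack of E₁, …, E_{nm}, and h'(x^{(1)}, …, x^{(nm)}) = h(∑_{i=1}^{nm} a_i x^{(i)}). Then R' is equivalent to R: for every input stream c bounded by M and every t ∈ ℤ₋ the outputs of R and R' coincide. -/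
/-! The state `x_t` depends linearly on the input coupling `V`, and the block-diagonal system
driven by the stacked couplings `E_i` runs the `nm` systems `(W, E_i)` side by side, so
`∑ a_i x^{(i)}` is exactly the state of `(W, ∑ a_i E_i) = (W, V)`. All series involved converge
because a contractive permutation matrix has `ℓ²` operator norm at most `λ < 1`. -/

open Matrix
open scoped Matrix.Norms.L2Operator

lemma permMatrix_eq_equivPermMatrix {ι : Type*} [DecidableEq ι] (σ : Equiv.Perm ι) :
    permMatrix σ = σ.permMatrix ℂ := by
  ext i j
  simp [permMatrix, PEquiv.toMatrix_apply]

lemma IsContractiveFullCycle.norm_lt_one {ι : Type*} [Fintype ι] [DecidableEq ι]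
    {W : Matrix ι ι ℂ} (hW : IsContractiveFullCycle W) : ‖W‖ < 1 := by
  obtain ⟨l, σ, hl0, hl1, -, rfl⟩ := hW
  calc ‖(l : ℂ) • permMatrix σ‖ = l * ‖σ.permMatrix ℂ‖ := by
        rw [norm_smul, Complex.norm_of_nonneg hl0.le, permMatrix_eq_equivPermMatrix]
    _ ≤ l * 1 := by gcongr; exact permMatrix_l2_opNorm_le σ
    _ < 1 := by linarith

lemma Matrix.l2_opNorm_pow_mul_le {𝕜 ι κ : Type*} [RCLike 𝕜] [Fintype ι] [DecidableEq ι]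
    [Fintype κ] [DecidableEq κ] (W : Matrix ι ι 𝕜) (V : Matrix ι κ 𝕜) (k : ℕ) :
    ‖W ^ k * V‖ ≤ ‖W‖ ^ k * ‖V‖ := by
  induction k with
  | zero => simp
  | succ k ih =>
    calc ‖W ^ (k + 1) * V‖ = ‖W * (W ^ k * V)‖ := by rw [pow_succ', Matrix.mul_assoc]
      _ ≤ ‖W‖ * (‖W‖ ^ k * ‖V‖) := by grw [l2_opNorm_mul, ih]
      _ = ‖W‖ ^ (k + 1) * ‖V‖ := by ring

lemma EuclideanSpace.summable_iff {𝕜 ι : Type*} [RCLike 𝕜] [Fintype ι]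
    {f : ℕ → EuclideanSpace 𝕜 ι} : Summable f ↔ ∀ i, Summable fun k => f k i :=
  (PiLp.continuousLinearEquiv 2 𝕜 fun _ : ι => 𝕜).summable.symm.trans Pi.summable

lemma EuclideanSpace.tsum_apply {𝕜 ι : Type*} [RCLike 𝕜] [Fintype ι]
    {f : ℕ → EuclideanSpace 𝕜 ι} (hf : Summable f) (i : ι) : (∑' k, f k) i = ∑' k, f k i :=
  (EuclideanSpace.proj i).map_tsum hf

section ReservoirState

variable {ι κ : Type*} [Fintype ι] [DecidableEq ι] [Fintype κ] [DecidableEq κ]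

lemma summable_pow_mul_mulVec {W : Matrix ι ι ℂ} (hW : ‖W‖ < 1) (V : Matrix ι κ ℂ)
    {u : ℕ → EuclideanSpace ℂ κ} {M : ℝ} (hu : ∀ k, ‖u k‖ ≤ M) :
    Summable fun k => WithLp.toLp 2 ((W ^ k * V) *ᵥ u k) := by
  refine Summable.of_norm_bounded
    ((summable_geometric_of_lt_one (norm_nonneg W) hW).mul_right (‖V‖ * M)) fun k => ?_
  calc ‖WithLp.toLp 2 ((W ^ k * V) *ᵥ u k)‖ ≤ ‖W ^ k * V‖ * ‖u k‖ := l2_opNorm_mulVec _ _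
    _ ≤ ‖W‖ ^ k * ‖V‖ * M := by
      grw [l2_opNorm_pow_mul_le, hu k]
    _ = ‖W‖ ^ k * (‖V‖ * M) := by ring

variable {W : Matrix ι ι ℂ} {c : ℤ → EuclideanSpace ℂ κ} {t : ℤ} {M : ℝ}

lemma resState_sum_smul {β : Type*} (hW : ‖W‖ < 1) (hc : ∀ k : ℕ, ‖c (t - k)‖ ≤ M)
    (s : Finset β) (a : β → ℂ) (B : β → Matrix ι κ ℂ) :
    resState W (∑ i ∈ s, a i • B i) c t = ∑ i ∈ s, a i • resState W (B i) c t := by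
  have hterm : ∀ k : ℕ, WithLp.toLp 2 ((W ^ k * ∑ i ∈ s, a i • B i) *ᵥ c (t - k))
      = ∑ i ∈ s, a i • WithLp.toLp 2 ((W ^ k * B i) *ᵥ c (t - k)) := fun k => by
    simp only [Matrix.mul_sum, Matrix.sum_mulVec, Matrix.mul_smul, Matrix.smul_mulVec,
      WithLp.toLp_sum, WithLp.toLp_smul]
  simp only [resState, hterm]
  rw [Summable.tsum_finsetSum fun i _ => (summable_pow_mul_mulVec hW (B i) hc).const_smul (a i)]
  simp only [tsum_const_smul'']

end ReservoirState

section BlockDiagonal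

variable {ι κ β : Type*} [Fintype ι] [DecidableEq ι] [Fintype κ] [Fintype β] [DecidableEq β]

lemma blockDiagonal_pow_mul_mulVec_apply (W : β → Matrix ι ι ℂ) (B : β → Matrix ι κ ℂ)
    (v : κ → ℂ) (k : ℕ) (r : ι) (i : β) :
    ((blockDiagonal W ^ k * of fun (p : ι × β) j => B p.2 p.1 j) *ᵥ v) (r, i)
      = ((W i ^ k * B i) *ᵥ v) r := by
  simp only [← blockDiagonal_pow, mulVec, dotProduct, mul_apply, of_apply, blockDiagonal_apply,
    Fintype.sum_prod_type, ite_mul, zero_mul, Finset.sum_ite_eq, Finset.mem_univ, if_true,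
    Pi.pow_apply]

lemma resState_blockDiagonal_apply [DecidableEq κ] {W : β → Matrix ι ι ℂ} (hW : ∀ i, ‖W i‖ < 1)
    {c : ℤ → EuclideanSpace ℂ κ} {t : ℤ} {M : ℝ} (hc : ∀ k : ℕ, ‖c (t - k)‖ ≤ M)
    (B : β → Matrix ι κ ℂ) (r : ι) (i : β) :
    resState (blockDiagonal W) (of fun (p : ι × β) j => B p.2 p.1 j) c t (r, i)
      = resState (W i) (B i) c t r := by
  have hblock := summable_pow_mul_mulVec (W := W i) (hW i) (B i) hc
  have hstacked : Summable fun k : ℕ => WithLp.toLp 2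
      ((blockDiagonal W ^ k * of fun (p : ι × β) j => B p.2 p.1 j) *ᵥ c (t - k)) :=
    EuclideanSpace.summable_iff.2 fun ⟨r', i'⟩ => by
      simpa [blockDiagonal_pow_mul_mulVec_apply] using
        EuclideanSpace.summable_iff.1 (summable_pow_mul_mulVec (hW i') (B i') hc) r'
  simp only [resState, EuclideanSpace.tsum_apply hstacked, EuclideanSpace.tsum_apply hblock,
    blockDiagonal_pow_mul_mulVec_apply]

end BlockDiagonal

theorem smcr_construction_equivalent_general
    (n m d : ℕ) (W : Matrix (Fin n) (Fin n) ℂ) (hW : IsContractiveFullCycle W)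
    (V : Matrix (Fin n) (Fin m) ℂ)
    (h : EuclideanSpace ℂ (Fin n) → EuclideanSpace ℂ (Fin d))
    (b : Module.Basis (Fin (n * m)) ℂ (Matrix (Fin n) (Fin m) ℂ))
    (a : Fin (n * m) → ℂ) (hV : V = ∑ i, a i • b i)
    (M : ℝ) :
    ∀ c : ℤ → EuclideanSpace ℂ (Fin m), (∀ t : ℤ, t ≤ 0 → ‖c t‖ ≤ M) →
      ∀ t : ℤ, t ≤ 0 →
        h (resState W V c t) =
          h (WithLp.toLp 2 (fun r : Fin n => ∑ i : Fin (n * m),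
              a i * resState (Matrix.blockDiagonal fun _ : Fin (n * m) => W)
                (Matrix.of fun (p : Fin n × Fin (n * m)) (j : Fin m) => b p.2 p.1 j)
                c t (r, i))) := by
  intro c hc t ht
  have hW1 : ‖W‖ < 1 := hW.norm_lt_one
  have hct : ∀ k : ℕ, ‖c (t - k)‖ ≤ M := fun k => hc _ (by omega)
  congr 1
  ext r
  rw [hV, resState_sum_smul hW1 hct]
  simp only [WithLp.ofLp_sum, WithLp.ofLp_smul, Finset.sum_apply, Pi.smul_apply, smul_eq_mul,
    resState_blockDiagonal_apply (fun _ => hW1) hct]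

theorem smcr_construction_equivalent
    (n m d : ℕ) (W : Matrix (Fin n) (Fin n) ℂ) (hW : IsContractiveFullCycle W)
    (V : Matrix (Fin n) (Fin m) ℂ)
    (h : EuclideanSpace ℂ (Fin n) → EuclideanSpace ℂ (Fin d)) (hh : Continuous h)
    (b : Module.Basis (Fin (n * m)) ℂ (Matrix (Fin n) (Fin m) ℂ))
    (hb : ∀ (i : Fin (n * m)) (r : Fin n) (c : Fin m), b i r c = 1 ∨ b i r c = -1)
    (a : Fin (n * m) → ℂ) (hV : V = ∑ i, a i • b i)
    (M : ℝ) (hM : 0 < M) :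
    ∀ c : ℤ → EuclideanSpace ℂ (Fin m), (∀ t : ℤ, t ≤ 0 → ‖c t‖ ≤ M) →
      ∀ t : ℤ, t ≤ 0 →
        h (resState W V c t) =
          h (WithLp.toLp 2 (fun r : Fin n => ∑ i : Fin (n * m),
              a i * resState (Matrix.blockDiagonal fun _ : Fin (n * m) => W)
                (Matrix.of fun (p : Fin n × Fin (n * m)) (j : Fin m) => b p.2 p.1 j)
                c t (r, i))) :=
  smcr_construction_equivalent_general n m d W hW V h b a hV M
end
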